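/- arXiv:2506.10894 — 2 statements merged into one kernel-verified Lean document; each statement's English description precedes it below -/
import Mathlib

section
/- Let H₁, H₂ be real Hilbert spaces, κ > 0, and define for (u, e, s) ∈ H₁ × H₂ × H₂ the norm ‖(u,e,s)‖²_X = ‖u‖₁² + ‖e‖₂² + κ‖s‖₂² (where ‖u‖₁ denotes a given Hilbert norm). For (λ, μ) with λ in a space whose gradient lands in H₂ and μ ∈ H₂, define b((u,e,s),(λ,μ)) = ⟨μ, e⟩ - ⟨μ, Gu⟩ - ⟨Gλ, s⟩ + ⟨λ, ζu⟩ for a bounded linear map G. Then choosing u = 0, e = μ, s = -(1/κ)Gλ gives b((0, μ, -(1/κ)Gλ),(λ,μ)) = ‖μ‖² + (1/κ)‖Gλ‖² and ‖(0, μ, -(1/κ)Gλ)‖_X = √(‖μ‖² + (1/κ)‖Gλ‖²), so that sup over x of b(x,y)/‖x‖_X ≥ √((1/κ)‖Gλ‖² + ‖μ‖²) for every (λ, μ). -/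
open scoped RealInnerProductSpace

theorem mul_norm_neg_inv_smul_sq {E : Type*} [NormedAddCommGroup E] [NormedSpace ℝ E]
    {κ : ℝ} (hκ : κ ≠ 0) (v : E) :
    κ * ‖-(1/κ) • v‖ ^ 2 = (1/κ) * ‖v‖ ^ 2 := by
  rw [norm_smul, mul_pow, Real.norm_eq_abs, sq_abs]
  field_simp

theorem infsup_constant_one_general
    {H₀ H₂ : Type*} [NormedAddCommGroup H₀] [InnerProductSpace ℝ H₀]
    [NormedAddCommGroup H₂] [InnerProductSpace ℝ H₂]
    (G : H₀ →L[ℝ] H₂) (ζ : H₀ →L[ℝ] H₀) (κ : ℝ) (hκ : 0 < κ)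
    (b : H₀ → H₂ → H₂ → H₀ → H₂ → ℝ)
    (hb : ∀ u e s l m, b u e s l m = ⟪m, e⟫ - ⟪m, G u⟫ - ⟪G l, s⟫ + ⟪l, ζ u⟫)
    (l : H₀) (m : H₂) :
    b 0 m (-(1/κ) • G l) l m = ‖m‖ ^ 2 + (1/κ) * ‖G l‖ ^ 2 ∧
    Real.sqrt (‖(0 : H₀)‖ ^ 2 + ‖m‖ ^ 2 + κ * ‖-(1/κ) • G l‖ ^ 2)
      = Real.sqrt (‖m‖ ^ 2 + (1/κ) * ‖G l‖ ^ 2) ∧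
    (∃ u : H₀, ∃ e s : H₂,
      b u e s l m / Real.sqrt (‖u‖ ^ 2 + ‖e‖ ^ 2 + κ * ‖s‖ ^ 2)
        ≥ Real.sqrt ((1/κ) * ‖G l‖ ^ 2 + ‖m‖ ^ 2)) := by
  have hvalue : b 0 m (-(1/κ) • G l) l m = ‖m‖ ^ 2 + (1/κ) * ‖G l‖ ^ 2 := by
    simp only [hb, map_zero, inner_zero_right, real_inner_smul_right, real_inner_self_eq_norm_sq]
    ring
  have hnorm : ‖(0 : H₀)‖ ^ 2 + ‖m‖ ^ 2 + κ * ‖-(1/κ) • G l‖ ^ 2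
      = ‖m‖ ^ 2 + (1/κ) * ‖G l‖ ^ 2 := by
    rw [norm_zero, mul_norm_neg_inv_smul_sq hκ.ne']
    ring
  refine ⟨hvalue, by rw [hnorm], 0, m, -(1/κ) • G l, ?_⟩
  rw [hvalue, hnorm, Real.div_sqrt, add_comm]

/-- Abstract inf-sup condition with constant 1 for the constraint form `b`. -/
theorem infsup_constant_one
    {H₀ H₂ : Type*} [NormedAddCommGroup H₀] [InnerProductSpace ℝ H₀] [CompleteSpace H₀]
    [NormedAddCommGroup H₂] [InnerProductSpace ℝ H₂] [CompleteSpace H₂]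
    (G : H₀ →L[ℝ] H₂) (ζ : H₀ →L[ℝ] H₀) (κ : ℝ) (hκ : 0 < κ)
    (b : H₀ → H₂ → H₂ → H₀ → H₂ → ℝ)
    (hb : ∀ u e s l m, b u e s l m = ⟪m, e⟫ - ⟪m, G u⟫ - ⟪G l, s⟫ + ⟪l, ζ u⟫)
    (l : H₀) (m : H₂) :
    b 0 m (-(1/κ) • G l) l m = ‖m‖ ^ 2 + (1/κ) * ‖G l‖ ^ 2 ∧
    Real.sqrt (‖(0 : H₀)‖ ^ 2 + ‖m‖ ^ 2 + κ * ‖-(1/κ) • G l‖ ^ 2)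
      = Real.sqrt (‖m‖ ^ 2 + (1/κ) * ‖G l‖ ^ 2) ∧
    (∃ u : H₀, ∃ e s : H₂,
      b u e s l m / Real.sqrt (‖u‖ ^ 2 + ‖e‖ ^ 2 + κ * ‖s‖ ^ 2)
        ≥ Real.sqrt ((1/κ) * ‖G l‖ ^ 2 + ‖m‖ ^ 2)) :=
  infsup_constant_one_general G ζ κ hκ b hb l m
end

section
/- Let V, Q be real Hilbert spaces, a: V×V → ℝ a continuous bilinear form on X = V, b a continuous bilinear form on V×Q, and B((x,y),(x',y')) = a(x,x') + b(x',y) - b(x,y'). If a is coercive on the kernel Z = {x : b(x,q) = 0 ∀q} with constant 1/2 and b satisfies the inf-sup condition with constant 1, then for every continuous linear functional F on V×Q the problem B((x,y),(δx,δy)) = F(δx,δy) for all (δx,δy) has a unique solution. -/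
/-!
Brezzi's argument. Let `B : V → Q` be the Riesz operator of `b`, so `b x q = ⟪B x, q⟫`. The
inf-sup condition says exactly that `B†` is bounded below. Hence `B B†` is coercive on `Q`, so `B`
is onto (Lax-Milgram), and `B†` has closed range, which is therefore `(ker B)ᗮ`. To solve the
system, first pick `x₀` meeting the constraint on `b x₀`, correct it within `Z = ker B` by
Lax-Milgram for `a` restricted to `Z`, and recover the multiplier `y` from the residual functional,
which vanishes on `Z` and so lies in the range of `B†`. Uniqueness follows from coercivity on `Z`
and injectivity of `B†`.
-/

open ContinuousLinearMap RealInnerProductSpace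
open scoped InnerProduct

namespace IsCoercive

variable {E : Type*} [NormedAddCommGroup E] [InnerProductSpace ℝ E] [CompleteSpace E]
  {B : E →L[ℝ] E →L[ℝ] ℝ}

theorem exists_apply_eq (hB : IsCoercive B) (ℓ : StrongDual ℝ E) : ∃ u, B u = ℓ := by
  refine ⟨hB.continuousLinearEquivOfBilin.symm ((InnerProductSpace.toDual ℝ E).symm ℓ), ?_⟩
  ext v
  rw [← hB.continuousLinearEquivOfBilin_apply, ContinuousLinearEquiv.apply_symm_apply,
    InnerProductSpace.toDual_symm_apply]

end IsCoercive

namespace ContinuousLinearMap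

variable {E F : Type*} [NormedAddCommGroup E] [InnerProductSpace ℝ E] [CompleteSpace E]
  [NormedAddCommGroup F] [InnerProductSpace ℝ F] [CompleteSpace F]
  {T : E →L[ℝ] F} {c : ℝ}

theorem adjoint_surjective_of_le_norm (hc : 0 < c) (hT : ∀ y, c * ‖y‖ ≤ ‖T y‖) :
    Function.Surjective (T†) := by
  have hB : IsCoercive ((innerSL ℝ).bilinearComp T T) := by
    refine ⟨c ^ 2, by positivity, fun y => ?_⟩
    calc c ^ 2 * ‖y‖ * ‖y‖ = (c * ‖y‖) ^ 2 := by ring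
      _ ≤ ‖T y‖ ^ 2 := by gcongr; exact hT y
      _ = _ := by simp only [bilinearComp_apply, coe_innerSL_apply, real_inner_self_eq_norm_sq]
  intro e
  obtain ⟨u, hu⟩ := hB.exists_apply_eq (innerSL ℝ e)
  refine ⟨T u, ext_inner_right ℝ fun y => ?_⟩
  rw [adjoint_inner_left]
  simpa using congr($hu y)

theorem range_eq_orthogonal_ker_adjoint_of_le_norm (hc : 0 < c) (hT : ∀ y, c * ‖y‖ ≤ ‖T y‖) :
    T.range = T†.kerᗮ := by
  have hanti : AntilipschitzWith c⁻¹.toNNReal T :=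
    T.antilipschitz_of_bound fun y => by
      rw [Real.coe_toNNReal _ (by positivity), ← div_eq_inv_mul, le_div_iff₀' hc]
      exact hT y
  have : CompleteSpace T.range := (hanti.isClosed_range T.uniformContinuous).completeSpace_coe
  rw [← T.orthogonal_range, Submodule.orthogonal_orthogonal]

end ContinuousLinearMap

section SaddlePoint

variable {V Q : Type*} [NormedAddCommGroup V] [InnerProductSpace ℝ V]
  [NormedAddCommGroup Q] [InnerProductSpace ℝ Q]

theorem iSup_inner_div_norm_le (v : V) : (⨆ x : {x : V // x ≠ 0}, ⟪x.1, v⟫ / ‖x.1‖) ≤ ‖v‖ :=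
  Real.iSup_le (fun _ => div_le_of_le_mul₀ (norm_nonneg _) (norm_nonneg _)
    ((real_inner_le_norm _ _).trans_eq (mul_comm _ _))) (norm_nonneg _)

theorem exists_inner_eq_bilin [CompleteSpace Q] (b : V →L[ℝ] Q →L[ℝ] ℝ) :
    ∃ B : V →L[ℝ] Q, ∀ x q, ⟪B x, q⟫ = b x q :=
  ⟨(InnerProductSpace.toDual ℝ Q).symm.toContinuousLinearEquiv.toContinuousLinearMap ∘L b,
    by simp⟩

def InfSupCondition (b : V →L[ℝ] Q →L[ℝ] ℝ) (c : ℝ) : Prop :=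
  ∀ y : Q, c * ‖y‖ ≤ ⨆ x : {x : V // x ≠ 0}, b x.1 y / ‖x.1‖

def CoerciveOnKer (a : V →L[ℝ] V →L[ℝ] ℝ) (b : V →L[ℝ] Q →L[ℝ] ℝ) (α : ℝ) : Prop :=
  ∀ x, b x = 0 → α * ‖x‖ ^ 2 ≤ a x x

namespace InfSupCondition

variable {b : V →L[ℝ] Q →L[ℝ] ℝ} {c : ℝ}

theorem eq_zero_of_flip_eq_zero (hc : 0 < c) (hb : InfSupCondition b c) {y : Q}
    (hy : b.flip y = 0) : y = 0 := by
  have := hb y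
  simp only [← flip_apply b, hy, zero_apply, zero_div, Real.iSup_const_zero] at this
  exact norm_eq_zero.mp (le_antisymm (nonpos_of_mul_nonpos_right this hc) (norm_nonneg _))

variable [CompleteSpace V] [CompleteSpace Q]

theorem exists_op_le_norm_adjoint (hb : InfSupCondition b c) :
    ∃ B : V →L[ℝ] Q, (∀ x q, ⟪B x, q⟫ = b x q) ∧ ∀ y, c * ‖y‖ ≤ ‖(B†) y‖ := by
  obtain ⟨B, hB⟩ := exists_inner_eq_bilin b
  refine ⟨B, hB, fun y => (hb y).trans ?_⟩
  simpa only [← hB, ← adjoint_inner_right] using iSup_inner_div_norm_le ((B†) y)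

theorem exists_apply_eq (hc : 0 < c) (hb : InfSupCondition b c) (ψ : StrongDual ℝ Q) :
    ∃ x, b x = ψ := by
  obtain ⟨B, hB, hbound⟩ := hb.exists_op_le_norm_adjoint
  obtain ⟨x, hx⟩ :=
    adjoint_surjective_of_le_norm hc hbound ((InnerProductSpace.toDual ℝ Q).symm ψ)
  refine ⟨x, ext fun q => ?_⟩
  rw [← hB, ← adjoint_adjoint B, hx, InnerProductSpace.toDual_symm_apply]

theorem exists_flip_apply_eq (hc : 0 < c) (hb : InfSupCondition b c) (φ : StrongDual ℝ V)
    (hφ : ∀ x, b x = 0 → φ x = 0) : ∃ y, b.flip y = φ := by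
  obtain ⟨B, hB, hbound⟩ := hb.exists_op_le_norm_adjoint
  have hmem : (InnerProductSpace.toDual ℝ V).symm φ ∈ (B†).range := by
    rw [range_eq_orthogonal_ker_adjoint_of_le_norm hc hbound, adjoint_adjoint]
    refine fun x hx => ?_
    rw [real_inner_comm, InnerProductSpace.toDual_symm_apply]
    refine hφ x (ext fun q => ?_)
    rw [← hB, show B x = 0 from hx, inner_zero_left, zero_apply]
  obtain ⟨y, hy⟩ := hmem
  refine ⟨y, ext fun x => ?_⟩
  rw [flip_apply, ← hB, ← adjoint_inner_right, ← coe_coe, hy, real_inner_comm,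
    InnerProductSpace.toDual_symm_apply]

end InfSupCondition

/-- The operator `z ↦ B(z, ·)` of the skew-symmetrized form, with the functional on `V × Q` split
into its restrictions to `V` and to `Q`. -/
noncomputable def saddleOp (a : V →L[ℝ] V →L[ℝ] ℝ) (b : V →L[ℝ] Q →L[ℝ] ℝ) :
    V × Q →L[ℝ] StrongDual ℝ V × StrongDual ℝ Q :=
  (a ∘L fst ℝ V Q + b.flip ∘L snd ℝ V Q).prod (-(b ∘L fst ℝ V Q))

@[simp]
theorem saddleOp_apply (a : V →L[ℝ] V →L[ℝ] ℝ) (b : V →L[ℝ] Q →L[ℝ] ℝ) (z : V × Q) :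
    saddleOp a b z = (a z.1 + b.flip z.2, -b z.1) :=
  rfl

variable {a : V →L[ℝ] V →L[ℝ] ℝ} {b : V →L[ℝ] Q →L[ℝ] ℝ} {α c : ℝ}

theorem CoerciveOnKer.isCoercive_restrict (hα : 0 < α) (ha : CoerciveOnKer a b α) :
    IsCoercive (a.bilinearComp b.ker.subtypeL b.ker.subtypeL) :=
  ⟨α, hα, fun z => by simpa [pow_two, mul_assoc] using ha z z.2⟩

theorem CoerciveOnKer.eq_zero (hα : 0 < α) (ha : CoerciveOnKer a b α) {x : V} (hbx : b x = 0)
    (hax : a x x = 0) : x = 0 := by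
  have := ha x hbx
  rw [hax] at this
  have hsq : ‖x‖ ^ 2 ≤ 0 := nonpos_of_mul_nonpos_right this hα
  exact norm_eq_zero.mp (pow_eq_zero_iff two_ne_zero |>.mp (le_antisymm hsq (sq_nonneg _)))

theorem saddleOp_injective (hα : 0 < α) (ha : CoerciveOnKer a b α) (hc : 0 < c)
    (hb : InfSupCondition b c) : Function.Injective (saddleOp a b) := by
  refine (injective_iff_map_eq_zero _).mpr fun ⟨x, y⟩ h => ?_
  simp only [saddleOp_apply, Prod.mk_eq_zero, neg_eq_zero] at h
  obtain ⟨hxy, hx⟩ := h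
  have hx0 : x = 0 := ha.eq_zero hα hx (by simpa [hx] using congr($hxy x))
  have hy0 : y = 0 := hb.eq_zero_of_flip_eq_zero hc (by simpa [hx0] using hxy)
  simp [hx0, hy0]

variable [CompleteSpace V] [CompleteSpace Q]

theorem saddleOp_surjective (hα : 0 < α) (ha : CoerciveOnKer a b α) (hc : 0 < c)
    (hb : InfSupCondition b c) : Function.Surjective (saddleOp a b) := by
  rintro ⟨φ, ψ⟩
  obtain ⟨x₀, hx₀⟩ := hb.exists_apply_eq hc (-ψ)
  have : CompleteSpace b.ker := b.isClosed_ker.completeSpace_coe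
  obtain ⟨z, hz⟩ := (ha.isCoercive_restrict hα).exists_apply_eq ((φ - a x₀) ∘L b.ker.subtypeL)
  obtain ⟨y, hy⟩ := hb.exists_flip_apply_eq hc (φ - a (z + x₀)) fun k hk => by
    have hzk : a z k = φ k - a x₀ k := by simpa using congr($hz ⟨k, hk⟩)
    simp [hzk]
  refine ⟨(z + x₀, y), ?_⟩
  simp [hy, hx₀, show b z = 0 from z.2]

end SaddlePoint

/-- Abstract Brezzi-type well-posedness for the skew-symmetrized saddle-point form. -/
theorem brezzi_wellposedness
    {V Q : Type*} [NormedAddCommGroup V] [InnerProductSpace ℝ V] [CompleteSpace V]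
    [NormedAddCommGroup Q] [InnerProductSpace ℝ Q] [CompleteSpace Q]
    (a : V →L[ℝ] V →L[ℝ] ℝ) (b : V →L[ℝ] Q →L[ℝ] ℝ)
    (hcoer : ∀ x : V, (∀ q : Q, b x q = 0) → a x x ≥ (1/2) * ‖x‖ ^ 2)
    (hinfsup : ∀ y : Q, (⨆ x : {x : V // x ≠ 0}, b x.1 y / ‖x.1‖) ≥ ‖y‖) :
    ∀ F : (V × Q) →L[ℝ] ℝ,
      ∃! z : V × Q, ∀ w : V × Q,
        a z.1 w.1 + b w.1 z.2 - b z.1 w.2 = F w := by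
  intro F
  have ha : CoerciveOnKer a b (1 / 2) := fun x hx => hcoer x fun q => by simp [hx]
  have hb : InfSupCondition b 1 := fun y => by simpa using hinfsup y
  have hbij : Function.Bijective (coprodEquiv (S := ℝ) ∘ saddleOp a b) :=
    (coprodEquiv (S := ℝ)).bijective.comp ⟨saddleOp_injective (by norm_num) ha one_pos hb,
      saddleOp_surjective (by norm_num) ha one_pos hb⟩
  -- `coprodEquiv (φ, ψ)` is the functional `w ↦ φ w.1 + ψ w.2`.
  refine (existsUnique_congr fun z => ?_).mp (hbij.existsUnique F)
  simp [ContinuousLinearMap.ext_iff, sub_eq_add_neg]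
end
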